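/- Let (M, d) be a metric space, μ a Borel measure on M, and n ≥ 2 an integer. Suppose K ⊆ M is compact and there exist constants C₁ > 0 and ε₀ > 0 such that μ(B(X, 2ε)) ≤ C₁ · (2ε)ⁿ for all X ∈ K and 0 < ε < ε₀/2, where B(X,r) is the open ball of radius r. Suppose further that for some X ∈ K, ε ∈ (0, ε₀/2), a family of Borel measures (η^r)_{r>0} on M satisfying μ ≥ ∫₀^∞ η^{r}(· ∩ B(X,2ε)) dr, constants c₂ ≥ 1, c₃ > 0, a set V ⊆ M, and maps (φ_t)_{0 ≤ t ≤ ε/c₂} with φ_t(V) ⊆ B(X, 2ε) and η^{1+t}(φ_t(V)) ≥ c₃ · η^1(V) for all 0 ≤ t ≤ ε/c₂. Then η^1(V) ≤ (C₁ · 2ⁿ · c₂ / c₃) · ε^{n−1}. -/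
import Mathlib


open MeasureTheory Metric Set

/-- abstract core of the Mirzakhani bound. If `μ(B(X,2ε)) ≤ C₁(2ε)ⁿ` on a
compact set `K`, `μ ≥ ∫₀^∞ η^r(· ∩ B(X,2ε)) dr`, and the slice `V` admits transversal copies
`φ_t(V) ⊆ B(X,2ε)` for `0 ≤ t ≤ ε/c₂` each of `η^{1+t}`-measure at least `c₃·η¹(V)`, then
`η¹(V) ≤ (C₁·2ⁿ·c₂/c₃)·ε^{n−1}`. -/
theorem stmt11 {M : Type*} [MetricSpace M] [MeasurableSpace M]
    (μ : Measure M) (n : ℕ) (hn : 2 ≤ n)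
    (K : Set M) (hK : IsCompact K)
    (C₁ ε₀ : ℝ) (hC₁ : 0 < C₁) (hε₀ : 0 < ε₀)
    (hball : ∀ Y ∈ K, ∀ ε : ℝ, 0 < ε → ε < ε₀ / 2 →
      μ (ball Y (2 * ε)) ≤ ENNReal.ofReal (C₁ * (2 * ε) ^ n))
    (X : M) (hX : X ∈ K) (ε : ℝ) (hε : 0 < ε) (hεlt : ε < ε₀ / 2)
    (η : ℝ → Measure M)
    (hdisint : ∀ s : Set M, MeasurableSet s →
      (∫⁻ r in Set.Ioi (0:ℝ), η r (s ∩ ball X (2 * ε))) ≤ μ s)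
    (c₂ c₃ : ℝ) (hc₂ : 1 ≤ c₂) (hc₃ : 0 < c₃)
    (V : Set M) (φ : ℝ → M → M)
    (hφball : ∀ t ∈ Icc (0:ℝ) (ε / c₂), φ t '' V ⊆ ball X (2 * ε))
    (hφmeas : ∀ t ∈ Icc (0:ℝ) (ε / c₂),
      ENNReal.ofReal c₃ * η 1 V ≤ η (1 + t) (φ t '' V)) :
    η 1 V ≤ ENNReal.ofReal (C₁ * 2 ^ n * c₂ / c₃ * ε ^ (n - 1)) := by
  have hc₂0 : (0:ℝ) < c₂ := lt_of_lt_of_le one_pos hc₂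
  have hεc₂ : (0:ℝ) < ε / c₂ := div_pos hε hc₂0
  -- constant lower bound on each slice
  have hconst : ∀ r ∈ Ioc (1:ℝ) (1 + ε / c₂),
      ENNReal.ofReal c₃ * η 1 V ≤ η r (ball X (2 * ε)) := by
    intro r hr
    have ht : r - 1 ∈ Icc (0:ℝ) (ε / c₂) :=
      ⟨by linarith [hr.1], by linarith [hr.2]⟩
    have h1 := hφmeas _ ht
    have h2 : η (1 + (r - 1)) (φ (r - 1) '' V) ≤ η r (ball X (2 * ε)) := by
      have : (1 + (r - 1)) = r := by ring
      rw [this]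
      exact measure_mono (hφball _ ht)
    exact h1.trans h2
  have hsub : Ioc (1:ℝ) (1 + ε / c₂) ⊆ Ioi 0 := fun r hr => lt_trans one_pos hr.1
  have key : (ENNReal.ofReal c₃ * η 1 V) * ENNReal.ofReal (ε / c₂)
      ≤ ENNReal.ofReal (C₁ * (2 * ε) ^ n) := by
    calc (ENNReal.ofReal c₃ * η 1 V) * ENNReal.ofReal (ε / c₂)
        = ∫⁻ _ in Ioc (1:ℝ) (1 + ε / c₂), ENNReal.ofReal c₃ * η 1 V := by
          rw [setLIntegral_const, Real.volume_Ioc, add_sub_cancel_left]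
      _ ≤ ∫⁻ r in Ioc (1:ℝ) (1 + ε / c₂), η r (ball X (2 * ε)) :=
          setLIntegral_mono' measurableSet_Ioc hconst
      _ ≤ ∫⁻ r in Ioi (0:ℝ), η r (ball X (2 * ε)) :=
          lintegral_mono_set hsub
      _ = ∫⁻ r in Ioi (0:ℝ), η r (toMeasurable μ (ball X (2 * ε)) ∩ ball X (2 * ε)) := by
          congr 1; ext r
          rw [inter_eq_self_of_subset_right (subset_toMeasurable μ _)]
      _ ≤ μ (toMeasurable μ (ball X (2 * ε))) :=
          hdisint _ (measurableSet_toMeasurable μ _)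
      _ = μ (ball X (2 * ε)) := measure_toMeasurable _
      _ ≤ ENNReal.ofReal (C₁ * (2 * ε) ^ n) := hball X hX ε hε hεlt
  -- rearrange
  have hA : (0:ℝ) < c₃ * (ε / c₂) := mul_pos hc₃ hεc₂
  have ha0 : ENNReal.ofReal (c₃ * (ε / c₂)) ≠ 0 := by
    simp [ENNReal.ofReal_eq_zero, not_le, hA]
  have hatop : ENNReal.ofReal (c₃ * (ε / c₂)) ≠ ⊤ := ENNReal.ofReal_ne_top
  have key' : ENNReal.ofReal (c₃ * (ε / c₂)) * η 1 V
      ≤ ENNReal.ofReal (C₁ * (2 * ε) ^ n) := by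
    rw [ENNReal.ofReal_mul hc₃.le]
    calc ENNReal.ofReal c₃ * ENNReal.ofReal (ε / c₂) * η 1 V
        = ENNReal.ofReal c₃ * η 1 V * ENNReal.ofReal (ε / c₂) := by ring
      _ ≤ _ := key
  have hfinal : η 1 V ≤ ENNReal.ofReal ((C₁ * (2 * ε) ^ n) / (c₃ * (ε / c₂))) := by
    have key'' : η 1 V * ENNReal.ofReal (c₃ * (ε / c₂))
        ≤ ENNReal.ofReal (C₁ * (2 * ε) ^ n) := by
      rw [mul_comm]; exact key'
    have h := (ENNReal.le_div_iff_mul_le (Or.inl ha0) (Or.inl hatop)).2 key'' 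
    rwa [← ENNReal.ofReal_div_of_pos hA] at h
  refine hfinal.trans_eq (congrArg _ ?_)
  have hn1 : n - 1 + 1 = n := Nat.sub_add_cancel (by omega)
  have : (2 * ε) ^ n = 2 ^ n * (ε ^ (n - 1) * ε) := by
    rw [mul_pow, ← pow_succ, hn1]
  rw [this]
  field_simp
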